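/- The homogeneous equation B * X (n+1) = A * X n (for all n ∈ ℕ) has only the trivial solution X = 0 among sequences X : ℕ → ZMod m if and only if d = 1 and m₁ = 1. Moreover, if the homogeneous equation has only the trivial solution, then for every sequence F : ℕ → ZMod m the equation B * X (n+1) = A * X n + F n (for all n ∈ ℕ) has exactly one solution X : ℕ → ZMod m, and whenever k is a natural number with B^k = 0 this solution is given by X n = - ∑_{s=0}^{k-1} (A⁻¹)^(s+1) * B^s * F (n+s), where A⁻¹ denotes the inverse of the unit A. -/

import Mathlib

lemma nat_dvd_pow_self (m c : ℕ) (hm : m ≠ 0) (h : ∀ p : ℕ, p.Prime → p ∣ m → p ∣ c) :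
    m ∣ c ^ m := by
  rcases eq_or_ne c 0 with rfl | hc
  · simp [zero_pow hm]
  rw [← Nat.factorization_le_iff_dvd hm (pow_ne_zero m hc), Finsupp.le_def]
  intro p
  rw [Nat.factorization_pow c m]
  by_cases hp : p.Prime
  · by_cases hpm : p ∣ m
    · have h1 : 0 < c.factorization p := hp.factorization_pos_of_dvd hc (h p hp hpm)
      have h2 : m.factorization p < m := Nat.factorization_lt p hm
      calc m.factorization p ≤ m := h2.le
        _ = m * 1 := (mul_one m).symm
        _ ≤ m * c.factorization p := Nat.mul_le_mul_left m h1
        _ = (m • c.factorization) p := rfl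
    · simp [Nat.factorization_eq_zero_of_not_dvd hpm]
  · simp [Nat.factorization_eq_zero_of_not_prime m hp]

lemma sol_formula (m : ℕ) (A B : ZMod m) (hA : IsUnit A) (k : ℕ) (hk : B ^ k = 0)
    (F : ℕ → ZMod m) (n : ℕ) :
    B * (- ∑ s ∈ Finset.range k, A⁻¹ ^ (s + 1) * B ^ s * F ((n + 1) + s)) =
    A * (- ∑ s ∈ Finset.range k, A⁻¹ ^ (s + 1) * B ^ s * F (n + s)) + F n := by
  rcases k with _ | k'
  · have : Subsingleton (ZMod m) := subsingleton_of_zero_eq_one (by simpa using hk.symm)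
    exact Subsingleton.elim _ _
  have key1 : B * (- ∑ s ∈ Finset.range (k' + 1), A⁻¹ ^ (s + 1) * B ^ s * F ((n + 1) + s)) =
      - ∑ s ∈ Finset.range (k' + 1), A⁻¹ ^ (s + 1) * B ^ (s + 1) * F ((n + 1) + s) := by
    rw [mul_neg, Finset.mul_sum]
    congr 1
    exact Finset.sum_congr rfl (fun s _ => by ring)
  have key2 : A * (- ∑ s ∈ Finset.range (k' + 1), A⁻¹ ^ (s + 1) * B ^ s * F (n + s)) =
      - ∑ s ∈ Finset.range (k' + 1), A⁻¹ ^ s * B ^ s * F (n + s) := by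
    rw [mul_neg, Finset.mul_sum]
    congr 1
    refine Finset.sum_congr rfl (fun s _ => ?_)
    have h1 : A * (A⁻¹ ^ (s + 1) * B ^ s * F (n + s)) =
        (A * A⁻¹) * (A⁻¹ ^ s * B ^ s * F (n + s)) := by ring
    rw [h1, ZMod.mul_inv_of_unit A hA, one_mul]
  rw [key1, key2]
  rw [Finset.sum_range_succ, Finset.sum_range_succ']
  simp only [pow_zero, one_mul, add_zero, hk, mul_zero, zero_mul]
  have hidx : ∀ s, n + (s + 1) = (n + 1) + s := fun s => by omega
  have : ∑ s ∈ Finset.range k', A⁻¹ ^ (s + 1) * B ^ (s + 1) * F (n + (s + 1)) =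
      ∑ s ∈ Finset.range k', A⁻¹ ^ (s + 1) * B ^ (s + 1) * F ((n + 1) + s) :=
    Finset.sum_congr rfl (fun s _ => by rw [hidx s])
  rw [this]
  ring

theorem stmt_17 (m : ℕ) (hm : 2 ≤ m) (a b : ℤ)
    (d : ℕ) (hdval : d = Int.gcd a (Int.gcd b (m : ℤ)))
    (m₁ : ℕ)
    (hm₁ : m₁ = ∏ p ∈ m.primeFactors.filter (fun p : ℕ => ¬ ((p : ℤ) ∣ b)),
      p ^ (m.factorization p)) :
    let A : ZMod m := (a : ZMod m)
    let B : ZMod m := (b : ZMod m)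
    ((∀ X : ℕ → ZMod m, (∀ n : ℕ, B * X (n + 1) = A * X n) → X = 0) ↔
      (d = 1 ∧ m₁ = 1)) ∧
    ((∀ X : ℕ → ZMod m, (∀ n : ℕ, B * X (n + 1) = A * X n) → X = 0) →
      ∀ F : ℕ → ZMod m,
        (∃! X : ℕ → ZMod m, ∀ n : ℕ, B * X (n + 1) = A * X n + F n) ∧
        (∀ k : ℕ, B ^ k = 0 →
          ∀ X : ℕ → ZMod m, (∀ n : ℕ, B * X (n + 1) = A * X n + F n) →
            ∀ n : ℕ, X n = - ∑ s ∈ Finset.range k,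
              A⁻¹ ^ (s + 1) * B ^ s * F (n + s))) := by
  intro A B
  have hm0 : m ≠ 0 := by omega
  haveI : NeZero m := ⟨hm0⟩
  -- m₁ = 1 characterization
  have hm₁_iff : m₁ = 1 ↔ ∀ p ∈ m.primeFactors, (p : ℤ) ∣ b := by
    constructor
    · intro h1 p hp
      by_contra hpb
      have hmem : p ∈ m.primeFactors.filter (fun p : ℕ => ¬ ((p : ℤ) ∣ b)) :=
        Finset.mem_filter.mpr ⟨hp, hpb⟩
      have hdvd : p ^ (m.factorization p) ∣ m₁ := hm₁ ▸ Finset.dvd_prod_of_mem _ hmem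
      rw [h1, Nat.dvd_one] at hdvd
      have hpp : p.Prime := Nat.prime_of_mem_primeFactors hp
      have hpos : 0 < m.factorization p :=
        hpp.factorization_pos_of_dvd hm0 (Nat.dvd_of_mem_primeFactors hp)
      have h1p : 1 < p ^ (m.factorization p) :=
        Nat.one_lt_pow (by omega) hpp.one_lt
      omega
    · intro h
      have : m.primeFactors.filter (fun p : ℕ => ¬ ((p : ℤ) ∣ b)) = ∅ := by
        apply Finset.filter_eq_empty_iff.mpr
        intro p hp
        simpa using h p hp
      rw [hm₁, this, Finset.prod_empty]
  -- key: from d = 1 ∧ m₁ = 1 derive IsUnit A and B^m = 0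
  have hAB : d = 1 → m₁ = 1 → IsUnit A ∧ B ^ m = 0 := by
    intro hd h1
    have hall := hm₁_iff.mp h1
    constructor
    · -- gcd a m = 1
      have hgcd : Int.gcd a (m : ℤ) = 1 := by
        by_contra hne
        have hg0 : Int.gcd a (m : ℤ) ≠ 0 := by
          intro h0
          have := Int.gcd_eq_zero_iff.mp h0
          simp [hm0] at this
        obtain ⟨p, hpp, hpd⟩ := Nat.exists_prime_and_dvd hne
        have hpa : (p : ℤ) ∣ a := dvd_trans (Int.natCast_dvd_natCast.mpr hpd) (Int.gcd_dvd_left _ _)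
        have hpm' : (p : ℤ) ∣ (m : ℤ) := dvd_trans (Int.natCast_dvd_natCast.mpr hpd) (Int.gcd_dvd_right _ _)
        have hpm : p ∣ m := Int.natCast_dvd_natCast.mp hpm'
        have hpb : (p : ℤ) ∣ b := hall p (Nat.mem_primeFactors.mpr ⟨hpp, hpm, hm0⟩)
        have hpgbm : (p : ℤ) ∣ (Int.gcd b (m : ℤ) : ℤ) := Int.dvd_coe_gcd hpb hpm'
        have hpd1 : (p : ℤ) ∣ (d : ℤ) := by
          rw [hdval]
          exact Int.dvd_coe_gcd hpa hpgbm
        rw [hd] at hpd1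
        have : p ∣ 1 := Int.natCast_dvd_natCast.mp (by exact_mod_cast hpd1)
        exact hpp.ne_one (Nat.dvd_one.mp this)
      obtain ⟨u, v, huv⟩ := Int.isCoprime_iff_gcd_eq_one.mpr hgcd
      refine IsUnit.of_mul_eq_one (a := A) ((u : ZMod m)) ?_
      have : ((a * u : ℤ) : ZMod m) = ((1 - v * m : ℤ) : ZMod m) := by
        congr 1; linarith
      calc A * (u : ZMod m) = ((a * u : ℤ) : ZMod m) := by push_cast; rfl
        _ = ((1 - v * m : ℤ) : ZMod m) := this
        _ = 1 := by push_cast; simp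
    · -- B ^ m = 0
      have hdvd : (m : ℤ) ∣ b ^ m := by
        have : m ∣ b.natAbs ^ m := by
          apply nat_dvd_pow_self m b.natAbs hm0
          intro p hpp hpm
          have := hall p (Nat.mem_primeFactors.mpr ⟨hpp, hpm, hm0⟩)
          simpa using Int.natAbs_dvd_natAbs.mpr this
        have hnat : m ∣ (b ^ m).natAbs := by rwa [Int.natAbs_pow]
        exact Int.dvd_natAbs.mp (Int.natCast_dvd_natCast.mpr hnat)
      have : ((b ^ m : ℤ) : ZMod m) = 0 := (ZMod.intCast_zmod_eq_zero_iff_dvd _ m).mpr hdvd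
      simpa using this
  -- homogeneous triviality from conditions
  have htriv : d = 1 → m₁ = 1 → ∀ X : ℕ → ZMod m, (∀ n : ℕ, B * X (n + 1) = A * X n) → X = 0 := by
    intro hd h1 X hX
    obtain ⟨hA, hB⟩ := hAB hd h1
    have step : ∀ n, X n = A⁻¹ * B * X (n + 1) := by
      intro n
      have := congrArg (fun z => A⁻¹ * z) (hX n)
      rw [← mul_assoc, ← mul_assoc, ZMod.inv_mul_of_unit A hA, one_mul] at this
      exact this.symm
    have key : ∀ j n, X n = A⁻¹ ^ j * B ^ j * X (n + j) := by
      intro j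
      induction j with
      | zero => intro n; simp
      | succ j ih =>
        intro n
        rw [ih n, step (n + j)]
        have : n + j + 1 = n + (j + 1) := by omega
        rw [this]; ring
    funext n
    rw [key m n, hB]
    simp
  have hforward : (∀ X : ℕ → ZMod m, (∀ n : ℕ, B * X (n + 1) = A * X n) → X = 0) →
      (d = 1 ∧ m₁ = 1) := by
      intro hP
      by_contra hcon
      rw [not_and_or] at hcon
      rcases hcon with hd | h1
      · -- d ≠ 1 : constant solution m / p
        have hd0 : d ≠ 0 := by
          intro h0
          rw [hdval] at h0
          have h2 : ((Int.gcd b (m : ℤ) : ℤ)) = 0 := (Int.gcd_eq_zero_iff.mp h0).2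
          have h3 : Int.gcd b (m : ℤ) = 0 := by exact_mod_cast h2
          have := (Int.gcd_eq_zero_iff.mp h3).2
          simp [hm0] at this
        obtain ⟨p, hpp, hpd⟩ := Nat.exists_prime_and_dvd hd
        have hpa : (p : ℤ) ∣ a := by
          rw [hdval] at hpd
          exact dvd_trans (Int.natCast_dvd_natCast.mpr hpd) (Int.gcd_dvd_left _ _)
        have hpbm : (p : ℤ) ∣ (Int.gcd b (m:ℤ) : ℤ) := by
          rw [hdval] at hpd
          exact dvd_trans (Int.natCast_dvd_natCast.mpr hpd) (Int.gcd_dvd_right _ _)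
        have hpb : (p : ℤ) ∣ b := dvd_trans hpbm (Int.gcd_dvd_left _ _)
        have hpm : p ∣ m := Int.natCast_dvd_natCast.mp (dvd_trans hpbm (Int.gcd_dvd_right _ _))
        set X : ℕ → ZMod m := fun _ => ((m / p : ℕ) : ZMod m) with hXdef
        have hzero : ∀ c : ℤ, (p:ℤ) ∣ c → (c : ZMod m) * ((m / p : ℕ) : ZMod m) = 0 := by
          intro c hc
          obtain ⟨c', hc'⟩ := hc
          have hcm : (c : ZMod m) * ((m / p : ℕ) : ZMod m) = ((c * ((m / p : ℕ) : ℤ) : ℤ) : ZMod m) := by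
            rw [Int.cast_mul, Int.cast_natCast]
          rw [hcm, ZMod.intCast_zmod_eq_zero_iff_dvd]
          obtain ⟨m', hm'⟩ := hpm
          have hdiv : (m / p : ℕ) = m' := by rw [hm']; exact Nat.mul_div_cancel_left m' hpp.pos
          rw [hdiv, hc']
          refine ⟨c', ?_⟩
          push_cast [hm']
          ring
        have hXsol : ∀ n, B * X (n + 1) = A * X n := by
          intro n
          show B * ((m / p : ℕ) : ZMod m) = A * ((m / p : ℕ) : ZMod m)
          rw [hzero b hpb, hzero a hpa]
        have := hP X hXsol
        have hX0 : X 0 = 0 := by rw [this]; rfl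
        have : m ∣ m / p := (ZMod.natCast_eq_zero_iff _ m).mp hX0
        have h1 : 0 < m / p := Nat.div_pos (Nat.le_of_dvd (by omega) hpm) hpp.pos
        have h2 : m / p < m := Nat.div_lt_self (by omega) hpp.one_lt
        have := Nat.le_of_dvd h1 this
        omega
      · -- m₁ ≠ 1 : geometric solution
        have : ∃ p ∈ m.primeFactors, ¬ ((p:ℤ) ∣ b) := by
          by_contra hno
          push_neg at hno
          exact h1 (hm₁_iff.mpr hno)
        obtain ⟨p, hp, hpb⟩ := this
        have hpp : p.Prime := Nat.prime_of_mem_primeFactors hp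
        have hpm : p ∣ m := Nat.dvd_of_mem_primeFactors hp
        set e := m.factorization p with he
        set q := p ^ e with hq
        have hqm : q ∣ m := Nat.ordProj_dvd m p
        have he1 : 1 ≤ e := hpp.factorization_pos_of_dvd hm0 hpm
        have hq2 : 2 ≤ q := by
          calc 2 ≤ p := hpp.two_le
            _ = p ^ 1 := (pow_one p).symm
            _ ≤ p ^ e := Nat.pow_le_pow_right hpp.pos he1
        set r := m / q with hr
        have hrq : r * q = m := Nat.div_mul_cancel hqm
        have hr1 : 1 ≤ r := Nat.div_pos (Nat.le_of_dvd (by omega) hqm) (by omega)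
        have hrm : r < m := by
          rcases Nat.lt_or_ge r m with h | h
          · exact h
          · nlinarith
        -- coprimality: gcd(b, q) = 1
        have hcop : IsCoprime b (q : ℤ) := by
          rw [hq]
          push_cast
          apply IsCoprime.pow_right
          rw [Int.isCoprime_iff_gcd_eq_one]
          by_contra hne
          obtain ⟨p', hpp', hpd'⟩ := Nat.exists_prime_and_dvd hne
          have h1' : (p' : ℤ) ∣ b := dvd_trans (Int.natCast_dvd_natCast.mpr hpd') (Int.gcd_dvd_left _ _)
          have h2' : (p' : ℤ) ∣ (p : ℤ) := dvd_trans (Int.natCast_dvd_natCast.mpr hpd') (Int.gcd_dvd_right _ _)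
          have : p' ∣ p := Int.natCast_dvd_natCast.mp h2'
          have : p' = p := (Nat.prime_dvd_prime_iff_eq hpp' hpp).mp this
          rw [this] at h1'
          exact hpb h1'
        obtain ⟨u, v, huv⟩ := hcop
        set X : ℕ → ZMod m := fun n => (((r : ℤ) * (u * a) ^ n : ℤ) : ZMod m) with hXdef
        have hXsol : ∀ n, B * X (n + 1) = A * X n := by
          intro n
          have hcast : B * X (n + 1) - A * X n =
              ((b * ((r : ℤ) * (u * a) ^ (n + 1)) - a * ((r:ℤ) * (u * a) ^ n) : ℤ) : ZMod m) := by
            show B * (((r : ℤ) * (u * a) ^ (n+1) : ℤ) : ZMod m) - A * (((r : ℤ) * (u * a) ^ n : ℤ) : ZMod m) = _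
            push_cast
            ring
          have hdvd : (m : ℤ) ∣ (b * ((r : ℤ) * (u * a) ^ (n + 1)) - a * ((r:ℤ) * (u * a) ^ n)) := by
            refine ⟨-(v * a * (u * a) ^ n), ?_⟩
            have hrqz : (r : ℤ) * (q : ℤ) = (m : ℤ) := by exact_mod_cast hrq
            linear_combination ((r:ℤ) * a * (u*a)^n) * huv + (-(v * a * (u*a)^n)) * hrqz
          have : B * X (n + 1) - A * X n = 0 := by
            rw [hcast, ZMod.intCast_zmod_eq_zero_iff_dvd]
            exact hdvd
          exact sub_eq_zero.mp this
        have := hP X hXsol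
        have hX0 : X 0 = 0 := by rw [this]; rfl
        have : ((r : ℤ) : ZMod m) = 0 := by
          have : X 0 = (((r:ℤ) * (u*a)^0 : ℤ) : ZMod m) := rfl
          simpa [this] using hX0
        rw [show ((r : ℤ) : ZMod m) = ((r : ℕ) : ZMod m) by push_cast; rfl] at this
        have := (ZMod.natCast_eq_zero_iff _ m).mp this
        have := Nat.le_of_dvd (by omega) this
        omega
  constructor
  · exact ⟨hforward, fun h => htriv h.1 h.2⟩
  · -- second part
    intro hP F
    have hdm : d = 1 ∧ m₁ = 1 := hforward hP
    obtain ⟨hA, hB⟩ := hAB hdm.1 hdm.2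
    set Y : ℕ → ZMod m := fun n => - ∑ s ∈ Finset.range m, A⁻¹ ^ (s + 1) * B ^ s * F (n + s) with hY
    have hYsol : ∀ n, B * Y (n + 1) = A * Y n + F n := fun n => sol_formula m A B hA m hB F n
    have huniq : ∀ X X' : ℕ → ZMod m, (∀ n, B * X (n + 1) = A * X n + F n) →
        (∀ n, B * X' (n + 1) = A * X' n + F n) → X = X' := by
      intro X X' hX hX'
      have hsub : (fun n => X n - X' n) = 0 := by
        apply hP
        intro n
        have h1 := hX n
        have h2 := hX' n
        have h3 : B * (X (n + 1) - X' (n + 1)) = B * X (n + 1) - B * X' (n + 1) := by ring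
        rw [h3, h1, h2]
        ring
      funext n
      exact sub_eq_zero.mp (congrFun hsub n)
    refine ⟨⟨Y, hYsol, fun X hX => huniq X Y hX hYsol⟩, ?_⟩
    intro k hk X hX n
    have hYk : ∀ n, B * (- ∑ s ∈ Finset.range k, A⁻¹ ^ (s + 1) * B ^ s * F ((n+1) + s)) =
        A * (- ∑ s ∈ Finset.range k, A⁻¹ ^ (s + 1) * B ^ s * F (n + s)) + F n :=
      fun n => sol_formula m A B hA k hk F n
    have := huniq X (fun n => - ∑ s ∈ Finset.range k, A⁻¹ ^ (s + 1) * B ^ s * F (n + s)) hX hYk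
    exact congrFun this n
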